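/- arXiv:1002.0267 — 5 statements merged into one kernel-verified Lean document; each statement's English description precedes it below -/
import Mathlib

section
/- Let A₂ = !![1,-a; 1,-b] as a complex 2×2 matrix and B = !![1,0,-a,0; 0,1,0,-a; 1,0,-b,0; 0,1,0,-b] as a complex 4×4 matrix, where a, b are real. Then the numerical range of B equals the numerical range of A₂, i.e. {⟪u, B u⟫ : ‖u‖ = 1, u ∈ ℂ⁴} = {⟪v, A₂ v⟫ : ‖v‖ = 1, v ∈ ℂ²}. -/
/-!
`B` is `A₂ ⊗ 1`, so for `u ∈ ℂ⁴` split into the coordinate pairs `v = (u₀, u₂)` and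
`w = (u₁, u₃)` one has `⟪u, B u⟫ = ⟪v, A₂ v⟫ + ⟪w, A₂ w⟫` with `‖v‖² + ‖w‖² = 1`. This is a convex
combination of points of `W(A₂)`, which lies in `W(A₂)` by the Toeplitz–Hausdorff theorem.

Toeplitz–Hausdorff: after an affine change of the operator it suffices to put `[0, 1]` inside
`W(T)` when `⟪x, T x⟫ = 0` and `⟪y, T y⟫ = 1`. Rotating `y` by a phase makes the cross term of the
quadratic form real; then `⟪p, T p⟫ / ‖p‖²` is real along the segment `p s = (1 - s) x + s y`, and
the intermediate value theorem gives every value in `[0, 1]`.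
-/

open Matrix ComplexConjugate Set
open scoped ComplexInnerProductSpace

lemma norm_eq_one_iff_inner_self_eq_one {E : Type*} [NormedAddCommGroup E] [InnerProductSpace ℂ E]
    {x : E} : ‖x‖ = 1 ↔ ⟪x, x⟫ = 1 :=
  ⟨inner_self_eq_one_of_norm_eq_one, fun h ↦ (pow_eq_one_iff_of_nonneg (norm_nonneg x)
    two_ne_zero).mp (by rw [← inner_self_eq_norm_sq (𝕜 := ℂ), h, RCLike.one_re])⟩

namespace LinearMap

variable {E : Type*} [NormedAddCommGroup E] [InnerProductSpace ℂ E] (T : E →ₗ[ℂ] E)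

def numericalRange : Set ℂ := {z | ∃ x, ‖x‖ = 1 ∧ ⟪x, T x⟫ = z}

lemma inner_smul_map_smul (c d : ℂ) (x y : E) : ⟪c • x, T (d • y)⟫ = conj c * d * ⟪x, T y⟫ := by
  rw [map_smul, inner_smul_left, inner_smul_right, mul_assoc]

lemma div_norm_sq_mem_numericalRange {x : E} (hx : x ≠ 0) :
    ⟪x, T x⟫ / (‖x‖ ^ 2 : ℂ) ∈ numericalRange T := by
  refine ⟨(‖x‖⁻¹ : ℂ) • x, norm_smul_inv_norm hx, ?_⟩
  rw [inner_smul_map_smul, map_inv₀, Complex.conj_ofReal]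
  ring

lemma exists_norm_eq_one_im_cross_eq_zero (x y : E) :
    ∃ μ : ℂ, ‖μ‖ = 1 ∧ (μ * ⟪x, T y⟫ + conj μ * ⟪y, T x⟫).im = 0 := by
  obtain ⟨μ, hμ, hγ⟩ := Complex.exists_norm_eq_mul_self (⟪x, T y⟫ - conj ⟪y, T x⟫)
  refine ⟨μ, hμ, ?_⟩
  have := congrArg Complex.im hγ
  simp only [Complex.ofReal_im, Complex.mul_im, Complex.sub_re, Complex.sub_im, Complex.conj_re,
    Complex.conj_im] at this
  simp only [Complex.add_im, Complex.mul_im, Complex.conj_re, Complex.conj_im]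
  linarith

lemma eq_zero_of_smul_add_smul_eq_zero {x y : E} (h₀ : ⟪x, T x⟫ = 0) (h₁ : ⟪y, T y⟫ = 1)
    {α β : ℂ} (h : α • x + β • y = 0) : β = 0 := by
  have hq := congrArg (fun z ↦ ⟪z, T z⟫) (eq_neg_of_add_eq_zero_left h)
  simp only [← neg_smul, inner_smul_map_smul, h₀, h₁, mul_zero, mul_one, map_neg, neg_mul_neg,
    Complex.conj_mul'] at hq
  exact norm_eq_zero.mp (pow_eq_zero_iff two_ne_zero |>.mp (by exact_mod_cast hq.symm))

lemma ofReal_mem_numericalRange_of_zero_of_one {x y : E} (hx : ‖x‖ = 1) (hy : ‖y‖ = 1)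
    (h₀ : ⟪x, T x⟫ = 0) (h₁ : ⟪y, T y⟫ = 1) {r : ℝ} (hr : r ∈ Icc (0 : ℝ) 1) :
    (r : ℂ) ∈ numericalRange T := by
  obtain ⟨μ, hμ, hcross⟩ := exists_norm_eq_one_im_cross_eq_zero T x y
  set c := μ * ⟪x, T y⟫ + conj μ * ⟪y, T x⟫
  have hμμ : conj μ * μ = 1 := by rw [Complex.conj_mul', hμ]; norm_num
  let p : ℝ → E := fun s ↦ ((1 - s : ℝ) : ℂ) • x + ((s : ℂ) * μ) • y
  have hq (s : ℝ) : ⟪p s, T (p s)⟫ = ((s ^ 2 + (1 - s) * s * c.re : ℝ) : ℂ) := by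
    have hc : c = (c.re : ℂ) := Complex.ext rfl (by simp [hcross])
    simp only [p, map_add, inner_add_left, inner_add_right, inner_smul_map_smul, h₀, h₁,
      map_mul, Complex.conj_ofReal]
    push_cast
    rw [← hc]
    linear_combination (s : ℂ) ^ 2 * hμμ
  have hp (s : ℝ) : p s ≠ 0 := by
    intro hps
    have hsμ : (s : ℂ) * μ = 0 := eq_zero_of_smul_add_smul_eq_zero T h₀ h₁ hps
    have hs : (s : ℂ) = 0 := (mul_eq_zero.mp hsμ).resolve_right (norm_ne_zero_iff.mp (by simp [hμ]))
    simp [p, hs] at hps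
    simp [hps] at hx
  let f : ℝ → ℝ := fun s ↦ (s ^ 2 + (1 - s) * s * c.re) / ‖p s‖ ^ 2
  have hf : ContinuousOn f (Icc 0 1) :=
    (by fun_prop : Continuous fun s : ℝ ↦ s ^ 2 + (1 - s) * s * c.re).continuousOn.div
      (by fun_prop) fun s _ ↦ pow_ne_zero 2 (norm_ne_zero_iff.mpr (hp s))
  have hf₀ : f 0 = 0 := by simp [f]
  have hf₁ : f 1 = 1 := by simp [f, p, norm_smul, hμ, hy]
  obtain ⟨s, -, hfs⟩ := intermediate_value_Icc zero_le_one hf (by rwa [hf₀, hf₁])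
  convert div_norm_sq_mem_numericalRange T (hp s) using 1
  rw [hq, ← hfs]
  push_cast [f]
  rfl

theorem convex_numericalRange : Convex ℝ (numericalRange T) := by
  rintro _ ⟨x, hx, rfl⟩ _ ⟨y, hy, rfl⟩ a b ha hb hab
  rcases eq_or_ne ⟪x, T x⟫ ⟪y, T y⟫ with h | h
  · rw [h, Convex.combo_self hab]
    exact ⟨y, hy, rfl⟩
  have hd : ⟪y, T y⟫ - ⟪x, T x⟫ ≠ 0 := sub_ne_zero.mpr h.symm
  set S := (⟪y, T y⟫ - ⟪x, T x⟫)⁻¹ • (T - ⟪x, T x⟫ • LinearMap.id)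
  have hS {u : E} (hu : ‖u‖ = 1) : ⟪u, S u⟫ = (⟪u, T u⟫ - ⟪x, T x⟫) / (⟪y, T y⟫ - ⟪x, T x⟫) := by
    rw [smul_apply, inner_smul_right, sub_apply, inner_sub_right, smul_apply, inner_smul_right,
      id_apply, inner_self_eq_one_of_norm_eq_one hu]
    ring
  obtain ⟨u, hu, hSu⟩ := ofReal_mem_numericalRange_of_zero_of_one S hx hy
    (by rw [hS hx, sub_self, zero_div]) (by rw [hS hy, div_self hd]) ⟨hb, by linarith⟩
  refine ⟨u, hu, ?_⟩
  rw [hS hu, div_eq_iff hd] at hSu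
  have habC : (a : ℂ) + b = 1 := by exact_mod_cast hab
  rw [Complex.real_smul, Complex.real_smul]
  linear_combination hSu - ⟪x, T x⟫ * habC

theorem add_inner_map_self_mem_numericalRange {v w : E} (h : ‖v‖ ^ 2 + ‖w‖ ^ 2 = 1) :
    ⟪v, T v⟫ + ⟪w, T w⟫ ∈ numericalRange T := by
  rcases eq_or_ne v 0 with rfl | hv
  · exact ⟨w, by simpa [pow_eq_one_iff_of_nonneg] using h, by simp⟩
  rcases eq_or_ne w 0 with rfl | hw
  · exact ⟨v, by simpa [pow_eq_one_iff_of_nonneg] using h, by simp⟩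
  have hv' : (‖v‖ : ℂ) ≠ 0 := by simpa using hv
  have hw' : (‖w‖ : ℂ) ≠ 0 := by simpa using hw
  convert convex_numericalRange T (div_norm_sq_mem_numericalRange T hv)
    (div_norm_sq_mem_numericalRange T hw) (sq_nonneg ‖v‖) (sq_nonneg ‖w‖) h using 1
  simp only [Complex.real_smul]
  push_cast
  field_simp

end LinearMap

lemma Matrix.setOf_dotProduct_mulVec_eq_numericalRange {ι : Type*} [Fintype ι] [DecidableEq ι]
    (A : Matrix ι ι ℂ) :
    {z : ℂ | ∃ u : ι → ℂ, star u ⬝ᵥ u = 1 ∧ star u ⬝ᵥ (A *ᵥ u) = z} =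
      (toLpLin 2 2 A).numericalRange := by
  have hnorm (u : ι → ℂ) : ‖WithLp.toLp 2 u‖ = 1 ↔ star u ⬝ᵥ u = 1 := by
    rw [norm_eq_one_iff_inner_self_eq_one, EuclideanSpace.inner_toLp_toLp, dotProduct_comm]
  ext z
  constructor
  · rintro ⟨u, hu, rfl⟩
    exact ⟨WithLp.toLp 2 u, (hnorm u).mpr hu, by
      rw [toLpLin_toLp, EuclideanSpace.inner_toLp_toLp, dotProduct_comm, toLin'_apply]⟩
  · rintro ⟨x, hx, rfl⟩
    exact ⟨x.ofLp, (hnorm x.ofLp).mp hx, by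
      rw [toLpLin_apply, EuclideanSpace.inner_eq_star_dotProduct, dotProduct_comm]⟩

theorem numerical_range_B_eq_A2 (a b : ℝ)
    (B : Matrix (Fin 4) (Fin 4) ℂ)
    (hB : B = !![1, 0, -(a:ℂ), 0; 0, 1, 0, -(a:ℂ); 1, 0, -(b:ℂ), 0; 0, 1, 0, -(b:ℂ)])
    (A₂ : Matrix (Fin 2) (Fin 2) ℂ) (hA : A₂ = !![1, -(a:ℂ); 1, -(b:ℂ)]) :
    {z : ℂ | ∃ u : Fin 4 → ℂ, star u ⬝ᵥ u = 1 ∧ star u ⬝ᵥ (B *ᵥ u) = z} =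
      {z : ℂ | ∃ v : Fin 2 → ℂ, star v ⬝ᵥ v = 1 ∧ star v ⬝ᵥ (A₂ *ᵥ v) = z} := by
  apply le_antisymm
  · rw [setOf_dotProduct_mulVec_eq_numericalRange A₂]
    rintro _ ⟨u, hu, rfl⟩
    set v := WithLp.toLp 2 ![u 0, u 2]
    set w := WithLp.toLp 2 ![u 1, u 3]
    have hvw : ‖v‖ ^ 2 + ‖w‖ ^ 2 = 1 := by
      have h : ((‖v‖ ^ 2 + ‖w‖ ^ 2 : ℝ) : ℂ) = star u ⬝ᵥ u := by
        simp [v, w, EuclideanSpace.norm_sq_eq, dotProduct, Fin.sum_univ_four, Complex.conj_mul']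
        ring
      exact_mod_cast h.trans hu
    convert (toLpLin 2 2 A₂).add_inner_map_self_mem_numericalRange hvw using 1
    simp [hB, hA, v, w, toLpLin_toLp, EuclideanSpace.inner_toLp_toLp, dotProduct, mulVec,
      Fin.sum_univ_four]
    ring
  · rintro _ ⟨v, hv, rfl⟩
    refine ⟨![v 0, 0, v 1, 0], ?_, ?_⟩
    · rw [← hv]
      simp [dotProduct, Fin.sum_univ_four]
    · simp [hB, hA, dotProduct, mulVec, Fin.sum_univ_four]
end

section
/- Let a > b > 0 be reals, f(x) = (x²-a)/(x²-b) and z(x) = (v* A₂ v)/(v* v) with v = (x, i f(x)) and A₂ = !![1,-a;1,-b]. Then for every real x with x ≠ 0 and x² ≠ b, the point (Re z(x), Im z(x)) lies on the ellipse (X - (1-b)/2)²/((1+b)/2)² + Y²/((1+a)/2)² = 1. -/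
/-!
Write the vector as `v = (p, i q)` with `p, q` real. Then `v* A₂ v = p² - b q² - i (1 + a) p q`
and `v* v = p² + q²`, so with `cos 2θ = (p² - q²) / (p² + q²)` and `sin 2θ = 2 p q / (p² + q²)`
the quotient is `z = (1 - b) / 2 + (1 + b) / 2 · cos 2θ - i (1 + a) / 2 · sin 2θ`,
a parametrisation of the ellipse.
-/

open Matrix Complex

lemma star_dotProduct_mulVec_of_real_imag (a b p q : ℝ) :
    star ![(p : ℂ), I * q] ⬝ᵥ (!![1, -(a : ℂ); 1, -(b : ℂ)] *ᵥ ![(p : ℂ), I * q])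
      = ⟨p ^ 2 - b * q ^ 2, -((1 + a) * p * q)⟩ := by
  simp only [dotProduct, mulVec, Fin.sum_univ_two, Pi.star_apply, RCLike.star_def, of_apply,
    cons_val', cons_val_fin_one, cons_val_zero, cons_val_one, map_mul, conj_ofReal, conj_I]
  apply Complex.ext <;>
    simp only [add_re, add_im, mul_re, mul_im, neg_re, neg_im, one_re, one_im, ofReal_re,
      ofReal_im, I_re, I_im] <;>
    ring

lemma star_dotProduct_self_of_real_imag (p q : ℝ) :
    star ![(p : ℂ), I * q] ⬝ᵥ ![(p : ℂ), I * q] = ((p ^ 2 + q ^ 2 : ℝ) : ℂ) := by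
  simp only [dotProduct, Fin.sum_univ_two, Pi.star_apply, RCLike.star_def, cons_val_zero,
    cons_val_one, cons_val_fin_one, map_mul, conj_ofReal, conj_I]
  push_cast
  linear_combination (-(q : ℂ) ^ 2) * I_sq

lemma div_sq_add_div_sq_eq_one {p q : ℝ} (hpq : p ^ 2 + q ^ 2 ≠ 0) :
    ((p ^ 2 - q ^ 2) / (p ^ 2 + q ^ 2)) ^ 2 + (2 * p * q / (p ^ 2 + q ^ 2)) ^ 2 = 1 := by
  field_simp
  ring

lemma rayleigh_quotient_mem_ellipse (a b : ℝ) {p q : ℝ} (ha : 1 + a ≠ 0) (hb : 1 + b ≠ 0)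
    (hpq : p ^ 2 + q ^ 2 ≠ 0) :
    ((p ^ 2 - b * q ^ 2) / (p ^ 2 + q ^ 2) - (1 - b) / 2) ^ 2 / ((1 + b) / 2) ^ 2
      + (-((1 + a) * p * q) / (p ^ 2 + q ^ 2)) ^ 2 / ((1 + a) / 2) ^ 2 = 1 := by
  have hre : (p ^ 2 - b * q ^ 2) / (p ^ 2 + q ^ 2) - (1 - b) / 2
      = (1 + b) / 2 * ((p ^ 2 - q ^ 2) / (p ^ 2 + q ^ 2)) := by
    field_simp
    ring
  have him : -((1 + a) * p * q) / (p ^ 2 + q ^ 2)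
      = -((1 + a) / 2) * (2 * p * q / (p ^ 2 + q ^ 2)) := by
    field_simp
  rw [hre, him, mul_pow, mul_pow, neg_sq, mul_div_cancel_left₀ _ (by positivity),
    mul_div_cancel_left₀ _ (by positivity), div_sq_add_div_sq_eq_one hpq]

theorem z_on_ellipse_general (a b : ℝ) (ha : a > b) (hb : b > 0)
    (f : ℝ → ℝ)
    (A₂ : Matrix (Fin 2) (Fin 2) ℂ) (hA : A₂ = !![1, -(a:ℂ); 1, -(b:ℂ)])
    (v : ℝ → Fin 2 → ℂ) (hv : v = fun (x : ℝ) => ![(x : ℂ), Complex.I * (f x : ℂ)])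
    (z : ℝ → ℂ) (hz : z = fun x => (star (v x) ⬝ᵥ (A₂ *ᵥ v x)) / (star (v x) ⬝ᵥ v x))
    (x : ℝ) (hx0 : x ≠ 0) :
    ((z x).re - (1 - b) / 2) ^ 2 / ((1 + b) / 2) ^ 2
      + (z x).im ^ 2 / ((1 + a) / 2) ^ 2 = 1 := by
  subst hA hv hz
  simp only [star_dotProduct_mulVec_of_real_imag, star_dotProduct_self_of_real_imag,
    div_ofReal_re, div_ofReal_im]
  exact rayleigh_quotient_mem_ellipse a b (by linarith) (by linarith) (by positivity)

theorem z_on_ellipse (a b : ℝ) (ha : a > b) (hb : b > 0)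
    (f : ℝ → ℝ) (hf : f = fun x => (x ^ 2 - a) / (x ^ 2 - b))
    (A₂ : Matrix (Fin 2) (Fin 2) ℂ) (hA : A₂ = !![1, -(a:ℂ); 1, -(b:ℂ)])
    (v : ℝ → Fin 2 → ℂ) (hv : v = fun (x : ℝ) => ![(x : ℂ), Complex.I * (f x : ℂ)])
    (z : ℝ → ℂ) (hz : z = fun x => (star (v x) ⬝ᵥ (A₂ *ᵥ v x)) / (star (v x) ⬝ᵥ v x))
    (x : ℝ) (hx0 : x ≠ 0) (hxb : x ^ 2 ≠ b) :
    ((z x).re - (1 - b) / 2) ^ 2 / ((1 + b) / 2) ^ 2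
      + (z x).im ^ 2 / ((1 + a) / 2) ^ 2 = 1 :=
  z_on_ellipse_general a b ha hb f A₂ hA v hv z hz x hx0
end

section
/- Let a > b > 0 be reals, f(x) = (x²-a)/(x²-b), A₂ = !![1,-a;1,-b], and z(x) = (v* A₂ v)/(v* v) with v = (x, i f(x)). If x₀ is a nonzero real with x₀² ≠ b and f(x₀) = x₀, then z(x₀) = (1-b)/2 - i(1+a)/2. -/
/-!
At a fixed point of `f` the vector `v x₀ = (x₀, i x₀)` is the nonzero multiple `x₀ • (1, i)`, and
the quotient `v* A₂ v / v* v` does not see nonzero scalings of `v`. So `z x₀` is the quotient at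
`(1, i)`, which is `(1 - b - i (1 + a)) / 2`.
-/

open Matrix Complex

namespace Matrix

variable {K n : Type*} [Field K] [StarRing K] [Fintype n]

/-- A point of the numerical range of `A` (unlike `ContinuousLinearMap.rayleighQuotient`, not just
its real part); the junk value at `w = 0` is `0`. -/
def rayleighQuotient (A : Matrix n n K) (w : n → K) : K :=
  (star w ⬝ᵥ (A *ᵥ w)) / (star w ⬝ᵥ w)

theorem rayleighQuotient_smul (A : Matrix n n K) (w : n → K) {c : K} (hc : c ≠ 0) :
    rayleighQuotient A (c • w) = rayleighQuotient A w := by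
  have hcc : c * star c ≠ 0 := mul_ne_zero hc (star_ne_zero.mpr hc)
  simp only [rayleighQuotient, star_smul, mulVec_smul, dotProduct_smul, smul_dotProduct,
    smul_eq_mul, ← mul_assoc]
  exact mul_div_mul_left _ _ hcc

end Matrix

theorem rayleighQuotient_one_I (a b : ℝ) :
    rayleighQuotient !![1, -(a : ℂ); 1, -(b : ℂ)] ![1, I] = (1 - b) / 2 - I * ((1 + a) / 2) := by
  have hden : star ![1, I] ⬝ᵥ ![1, I] = 2 := by
    simp only [dotProduct, Fin.sum_univ_two, Pi.star_apply, RCLike.star_def, Matrix.cons_val_zero,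
      Matrix.cons_val_one, map_one, conj_I]
    linear_combination -I_sq
  rw [rayleighQuotient, hden, div_eq_iff two_ne_zero]
  simp only [dotProduct, mulVec, Fin.sum_univ_two, Pi.star_apply, RCLike.star_def,
    Matrix.cons_val_zero, Matrix.cons_val_one, Matrix.of_apply, Matrix.cons_val', Matrix.empty_val',
    Matrix.cons_val_fin_one, map_one, conj_I]
  linear_combination (b : ℂ) * I_sq

theorem z_fixed_point_vertex_general (a b : ℝ)
    (f : ℝ → ℝ)
    (A₂ : Matrix (Fin 2) (Fin 2) ℂ) (hA : A₂ = !![1, -(a:ℂ); 1, -(b:ℂ)])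
    (v : ℝ → Fin 2 → ℂ) (hv : v = fun (x : ℝ) => ![(x : ℂ), Complex.I * (f x : ℂ)])
    (z : ℝ → ℂ) (hz : z = fun x => (star (v x) ⬝ᵥ (A₂ *ᵥ v x)) / (star (v x) ⬝ᵥ v x))
    (x₀ : ℝ) (hx0 : x₀ ≠ 0) (hfix : f x₀ = x₀) :
    z x₀ = ((1 - b) / 2 : ℝ) - Complex.I * ((1 + a) / 2 : ℝ) := by
  have hv₀ : v x₀ = (x₀ : ℂ) • ![1, I] := by
    ext i
    fin_cases i <;> simp [hv, hfix, mul_comm]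
  have hz₀ : z x₀ = rayleighQuotient A₂ (v x₀) := by rw [hz, rayleighQuotient]
  rw [hz₀, hv₀, rayleighQuotient_smul _ _ (ofReal_ne_zero.mpr hx0), hA, rayleighQuotient_one_I]
  push_cast
  ring

theorem z_fixed_point_vertex (a b : ℝ) (ha : a > b) (hb : b > 0)
    (f : ℝ → ℝ) (hf : f = fun x => (x ^ 2 - a) / (x ^ 2 - b))
    (A₂ : Matrix (Fin 2) (Fin 2) ℂ) (hA : A₂ = !![1, -(a:ℂ); 1, -(b:ℂ)])
    (v : ℝ → Fin 2 → ℂ) (hv : v = fun (x : ℝ) => ![(x : ℂ), Complex.I * (f x : ℂ)])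
    (z : ℝ → ℂ) (hz : z = fun x => (star (v x) ⬝ᵥ (A₂ *ᵥ v x)) / (star (v x) ⬝ᵥ v x))
    (x₀ : ℝ) (hx0 : x₀ ≠ 0) (hxb : x₀ ^ 2 ≠ b) (hfix : f x₀ = x₀) :
    z x₀ = ((1 - b) / 2 : ℝ) - Complex.I * ((1 + a) / 2 : ℝ) :=
  z_fixed_point_vertex_general a b f A₂ hA v hv z hz x₀ hx0 hfix
end

section
/- Let a > b > 0 be reals, f(x) = (x²-a)/(x²-b), A₂ = !![1,-a;1,-b], and z(x) = (v* A₂ v)/(v* v) with v = (x, i f(x)). If x₀ is a nonzero real with x₀² ≠ b and f(x₀) = -x₀, then z(x₀) = (1-b)/2 + i(1+a)/2. -/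
open Matrix Complex

theorem z_antifixed_point_vertex (a b : ℝ) (ha : a > b) (hb : b > 0)
    (f : ℝ → ℝ) (hf : f = fun x => (x ^ 2 - a) / (x ^ 2 - b))
    (A₂ : Matrix (Fin 2) (Fin 2) ℂ) (hA : A₂ = !![1, -(a:ℂ); 1, -(b:ℂ)])
    (v : ℝ → Fin 2 → ℂ) (hv : v = fun (x : ℝ) => ![(x : ℂ), Complex.I * (f x : ℂ)])
    (z : ℝ → ℂ) (hz : z = fun x => (star (v x) ⬝ᵥ (A₂ *ᵥ v x)) / (star (v x) ⬝ᵥ v x))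
    (x₀ : ℝ) (hx0 : x₀ ≠ 0) (hxb : x₀ ^ 2 ≠ b) (hfix : f x₀ = -x₀) :
    z x₀ = ((1 - b) / 2 : ℝ) + Complex.I * ((1 + a) / 2 : ℝ) := by
  subst hz hv hA
  have hx0' : (x₀ : ℂ) ≠ 0 := by exact_mod_cast hx0
  simp only [hfix]
  have hden : (star ![(x₀ : ℂ), Complex.I * ((-x₀ : ℝ) : ℂ)]) ⬝ᵥ
      ![(x₀ : ℂ), Complex.I * ((-x₀ : ℝ) : ℂ)] = 2 * (x₀ : ℂ) ^ 2 := by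
    simp [dotProduct, Fin.sum_univ_two, _root_.map_mul, Complex.conj_I, Complex.conj_ofReal]
    ring_nf
    rw [Complex.I_sq]
    push_cast
    ring
  rw [div_eq_iff (by rw [hden]; exact mul_ne_zero two_ne_zero (pow_ne_zero 2 hx0'))]
  simp [dotProduct, mulVec, Fin.sum_univ_two, Complex.ext_iff]
  push_cast
  constructor <;> ring
end

section
/- Let a > b > 0, f(x) = (x²-a)/(x²-b), and g(x) = ( -a²b + (2a+b)b x² - 3b x⁴ + x⁶ ) / ( a² + (b²-2a)x² + (1-2b)x⁴ + x⁶ ). If x₀ is a real number with f(x₀) = 0 (i.e. x₀² = a), then g'(x₀) = 0 and x₀ is a local maximum of g. -/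
theorem zero_of_f_local_max_of_g (a b : ℝ) (ha : a > b) (hb : b > 0)
    (f : ℝ → ℝ) (hf : f = fun x => (x ^ 2 - a) / (x ^ 2 - b))
    (g : ℝ → ℝ) (hg : g = fun x =>
      (-(a ^ 2 * b) + (2 * a + b) * b * x ^ 2 - 3 * b * x ^ 4 + x ^ 6)
        / (a ^ 2 + (b ^ 2 - 2 * a) * x ^ 2 + (1 - 2 * b) * x ^ 4 + x ^ 6))
    (x₀ : ℝ) (hxb : x₀ ^ 2 ≠ b) (hx₀ : f x₀ = 0) :
    deriv g x₀ = 0 ∧ IsLocalMax g x₀ := by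
  have hx2 : x₀ ^ 2 = a := by
    rw [hf] at hx₀
    simp only at hx₀
    rcases div_eq_zero_iff.mp hx₀ with h | h
    · linarith [sub_eq_zero.mp h]
    · exact absurd (sub_eq_zero.mp h) hxb
  have hD : ∀ x : ℝ, 0 < a ^ 2 + (b ^ 2 - 2 * a) * x ^ 2 + (1 - 2 * b) * x ^ 4 + x ^ 6 := by
    intro x
    have h1 : a ^ 2 + (b ^ 2 - 2 * a) * x ^ 2 + (1 - 2 * b) * x ^ 4 + x ^ 6
        = (x ^ 2 - a) ^ 2 + x ^ 2 * (x ^ 2 - b) ^ 2 := by ring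
    rw [h1]
    rcases eq_or_ne (x ^ 2) a with h | h
    · have hxa : 0 < x ^ 2 * (x ^ 2 - b) ^ 2 := by
        rw [h]
        have h1 : 0 < a := by linarith
        have h2 : a - b ≠ 0 := by intro hh; apply hxb; nlinarith
        positivity
      nlinarith [sq_nonneg (x ^ 2 - a)]
    · have h1 : 0 < (x ^ 2 - a) ^ 2 := pow_two_pos_of_ne_zero (sub_ne_zero.mpr h)
      nlinarith [mul_nonneg (sq_nonneg x) (sq_nonneg (x ^ 2 - b))]
  have hg0 : g x₀ = 1 := by
    rw [hg]
    simp only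
    rw [div_eq_one_iff_eq (ne_of_gt (hD x₀))]
    linear_combination (x₀ ^ 4 + (a - 3 * b) * x₀ ^ 2 + a ^ 2 - a * b + b ^ 2
      - (x₀ ^ 4 + (a + 1 - 2 * b) * x₀ ^ 2 + a ^ 2 - a - 2 * a * b + b ^ 2)) * hx2
  have hle : ∀ x : ℝ, g x ≤ g x₀ := by
    intro x
    rw [hg0, hg]
    simp only
    rw [div_le_one (hD x)]
    nlinarith [sq_nonneg (x ^ 2 - a), hb]
  have hmax : IsLocalMax g x₀ := Filter.Eventually.of_forall hle
  refine ⟨hmax.deriv_eq_zero, hmax⟩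
end
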